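/- Let u be a nonzero Laurent polynomial over ℂ having symmetry with type ε z^c (ε ∈ {1,−1}, c ∈ ℤ). Then ε = (−1)^{mz(u,1)} and c ≡ mz(u,1) + mz(u,−1) (mod 2). -/

import Mathlib

open LaurentPolynomial Matrix
open scoped Classical

noncomputable section

abbrev LP := LaurentPolynomial ℂ

namespace QT

/-- The coefficient of `z^k` in a Laurent polynomial. -/
def coeff (u : LP) (k : ℤ) : ℂ := (AddMonoidAlgebra.coeff u) k

/-- The Hermitian conjugate `u⋆(z) = Σ conj(u(k)) z^{-k}`. -/
def hstar (u : LP) : LP :=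
  AddMonoidAlgebra.ofCoeff (
    Finsupp.mapDomain (fun k => -k)
      (Finsupp.mapRange (starRingEnd ℂ) (map_zero _) (AddMonoidAlgebra.coeff u)))

/-- `u` has symmetry with type `ε z^c`, i.e. `u(k) = ε u(c-k)` for all `k`. -/
def SymT (u : LP) (ε : ℂ) (c : ℤ) : Prop := ∀ k : ℤ, coeff u k = ε * coeff u (c - k)

def Sgn (ε : ℂ) : Prop := ε = 1 ∨ ε = -1

/-- `u` has symmetry (with some type). -/
def HasSym (u : LP) : Prop := ∃ ε c, Sgn ε ∧ SymT u ε c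

/-- The Laurent polynomial `z - a`. -/
def zsub (a : ℂ) : LP := T 1 - LaurentPolynomial.C a

/-- `m` is the multiplicity of `z₀` as a zero of `u`. -/
def mzIs (u : LP) (z₀ : ℂ) (m : ℕ) : Prop := zsub z₀ ^ m ∣ u ∧ ¬ zsub z₀ ^ (m + 1) ∣ u

/-- The multiplicity of `z₀` as a zero of `u`, as a function. -/
def mzF (u : LP) (z₀ : ℂ) : ℕ := sSup {m : ℕ | zsub z₀ ^ m ∣ u}

/-- The difference-of-(Hermitian)-squares property with respect to symmetry type `ε z^c`. -/
def DOS (u : LP) (ε : ℂ) (c : ℤ) : Prop :=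
  ∃ (u₁ u₂ : LP) (ε₁ ε₂ : ℂ) (c₁ c₂ : ℤ),
    Sgn ε₁ ∧ Sgn ε₂ ∧ SymT u₁ ε₁ c₁ ∧ SymT u₂ ε₂ c₂ ∧
    u₁ * hstar u₁ - u₂ * hstar u₂ = u ∧ ε₁ * ε₂ = ε ∧ c₁ - c₂ = c

/-- Degree: the largest exponent with nonzero coefficient (0 for the zero polynomial). -/
def degL (u : LP) : ℤ :=
  if h : u = 0 then 0
  else (AddMonoidAlgebra.coeff u).support.max' (Finsupp.support_nonempty_iff.mpr
    (fun h0 => h (by rw [← AddMonoidAlgebra.ofCoeff_coeff u, h0]; rfl)))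

/-- Lower degree: the smallest exponent with nonzero coefficient (0 for zero). -/
def ldegL (u : LP) : ℤ :=
  if h : u = 0 then 0
  else (AddMonoidAlgebra.coeff u).support.min' (Finsupp.support_nonempty_iff.mpr
    (fun h0 => h (by rw [← AddMonoidAlgebra.ofCoeff_coeff u, h0]; rfl)))

/-- Length `deg - ldeg`, with `len 0 = ⊥`. -/
def lenL (u : LP) : WithBot ℤ := if u = 0 then ⊥ else ((degL u - ldegL u : ℤ) : WithBot ℤ)

/-- `g` is a greatest common divisor of `a` and `b`. -/
def IsGCD2 (g a b : LP) : Prop := g ∣ a ∧ g ∣ b ∧ ∀ e : LP, e ∣ a → e ∣ b → e ∣ g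

/-- `g` is a greatest common divisor of `a`, `b`, `c`, `d`. -/
def IsGCD4 (g a b c d : LP) : Prop :=
  g ∣ a ∧ g ∣ b ∧ g ∣ c ∧ g ∣ d ∧ ∀ e : LP, e ∣ a → e ∣ b → e ∣ c → e ∣ d → e ∣ g

/-- The Hermitian conjugate transpose of a matrix of Laurent polynomials. -/
def hstarM (A : Matrix (Fin 2) (Fin 2) LP) : Matrix (Fin 2) (Fin 2) LP :=
  fun i j => hstar (A j i)

def IsHerm (A : Matrix (Fin 2) (Fin 2) LP) : Prop := hstarM A = A

/-- `diag(1, -1)`. -/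
def Jmat : Matrix (Fin 2) (Fin 2) LP := Matrix.diagonal ![1, -1]

/-- A square matrix of Laurent polynomials is strongly invertible if its determinant is a
nonzero monomial. -/
def StrongInv (A : Matrix (Fin 2) (Fin 2) LP) : Prop :=
  ∃ (lam : ℂ) (k : ℤ), lam ≠ 0 ∧ A.det = LaurentPolynomial.C lam * T k

/-- Compatible symmetry for a `2×2` matrix of Laurent polynomials. -/
def CompatSym (A : Matrix (Fin 2) (Fin 2) LP) : Prop :=
  ∃ (ε ε' : Fin 2 → ℂ) (c c' : Fin 2 → ℤ),
    (∀ j, Sgn (ε j)) ∧ (∀ k, Sgn (ε' k)) ∧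
    ∀ j k, SymT (A j k) (ε j * ε' k) (c' k - c j)

/-- Substitution `z ↦ z²`. -/
def sqDom (u : LP) : LP :=
  AddMonoidAlgebra.ofCoeff (Finsupp.mapDomain (fun k => 2 * k) (AddMonoidAlgebra.coeff u))

/-- Substitution `z ↦ -z`. -/
def negSub (u : LP) : LP :=
  (AddMonoidAlgebra.coeff u).sum fun k c => show LP from AddMonoidAlgebra.ofCoeff (Finsupp.single k ((-1 : ℂ) ^ k * c))

/-- The `γ`-coset `u^{[γ]}(z) = Σ_k u(γ + 2k) z^k`. -/
def cosetL (u : LP) (γ : ℤ) : LP :=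
  AddMonoidAlgebra.ofCoeff (
    Finsupp.comapDomain (fun k : ℤ => γ + 2 * k) (AddMonoidAlgebra.coeff u)
      (by intro a _ b _ h; simp only at h; omega))

/-- Evaluation of a Laurent polynomial at a point. -/
def evalL (u : LP) (z : ℂ) : ℂ := (AddMonoidAlgebra.coeff u).sum fun k c => c * z ^ k

/-- `{a; b₁, b₂}_{Θ,(1,-1)}` is a quasi-tight framelet filter bank. -/
def QTFB (a Θ b₁ b₂ : LP) : Prop :=
  sqDom Θ * hstar a * a + hstar b₁ * b₁ - hstar b₂ * b₂ = Θ ∧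
  sqDom Θ * hstar a * negSub a + hstar b₁ * negSub b₁ - hstar b₂ * negSub b₂ = 0

/-- The matrix `N_{a,Θ|n_b}` built from the quotients `A`, `B`. -/
def Nmat (A B : LP) : Matrix (Fin 2) (Fin 2) LP :=
  LaurentPolynomial.C (2 : ℂ)⁻¹ •
    !![cosetL A 0 + cosetL B 0, cosetL A 1 - cosetL B 1;
       T 1 * (cosetL A 1 + cosetL B 1), cosetL A 0 - cosetL B 0]

/-! Write `u = (z - ζ)^m w` with `w(ζ) ≠ 0`, for `ζ = ±1`. Because `ζ⁻¹ = ζ`, the substitution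
`z ↦ z⁻¹` sends `z - ζ` to `-ζ z⁻¹ (z - ζ)`, so the symmetry `u = ε z^c u(z⁻¹)` descends to
`w = ε z^c (-ζ z⁻¹)^m w(z⁻¹)`. Evaluating at `ζ` and cancelling `w(ζ)` gives `ε ζ^c (-1)^m = 1`:
at `ζ = 1` this determines `ε`, and at `ζ = -1` the parity of `c`. -/

section Invert

variable {R S : Type*} [CommSemiring R] [CommSemiring S] (f : R →+* S) (x : Sˣ)

theorem eval₂_invert (p : R[T;T⁻¹]) : eval₂ f x (invert p) = eval₂ f x⁻¹ p := by
  induction p using LaurentPolynomial.induction_on' with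
  | add p q hp hq => rw [map_add, map_add, hp, hq, map_add]
  | C_mul_T n a => simp

end Invert

theorem zsub_ne_zero (a : ℂ) : zsub a ≠ 0 := by
  intro h
  simpa [zsub] using congrArg (fun f : LP => f.coeff 1) h

theorem zsub_dvd_of_eval₂_eq_zero {ζ : ℂˣ} {u : LP} (h : eval₂ (RingHom.id ℂ) ζ u = 0) :
    zsub ζ ∣ u := by
  obtain ⟨n, p, hp⟩ := u.exists_T_pow
  have hroot : p.IsRoot (ζ : ℂ) := by
    rw [Polynomial.IsRoot, ← Polynomial.eval₂_id, ← eval₂_toLaurent, hp, map_mul, h, zero_mul]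
  have hdvd : zsub ζ ∣ u * T n := by
    simpa [← hp, zsub, Polynomial.toLaurent_X, Polynomial.toLaurent_C] using
      map_dvd Polynomial.toLaurent (Polynomial.dvd_iff_isRoot.mpr hroot)
  exact (isUnit_T (n : ℤ)).dvd_mul_right.mp hdvd

theorem invert_zsub {a : ℂ} (ha : a ≠ 0) :
    invert (zsub a) = -LaurentPolynomial.C a * T (-1) * zsub a⁻¹ := by
  have hT : (T (-1) : LP) * T 1 = 1 := by rw [← T_add]; norm_num
  have hC : LaurentPolynomial.C a * LaurentPolynomial.C a⁻¹ = 1 := by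
    rw [← map_mul, mul_inv_cancel₀ ha, map_one]
  simp only [zsub, map_sub, invert_T, invert_C]
  linear_combination (LaurentPolynomial.C a) * hT - T (-1) * hC

theorem SymT.eq_C_mul_T_mul_invert {u : LP} {ε : ℂ} {c : ℤ} (h : SymT u ε c) :
    u = LaurentPolynomial.C ε * T c * invert u := by
  ext k
  rw [← single_eq_C_mul_T, AddMonoidAlgebra.coeff_single_mul_apply, invert_apply,
    show -(-c + k) = c - k by ring]
  exact h k

theorem mzIs.eval₂_quotient_ne_zero {u w : LP} {ζ : ℂˣ} {m : ℕ} (hm : mzIs u ζ m)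
    (hw : u = zsub ζ ^ m * w) : eval₂ (RingHom.id ℂ) ζ w ≠ 0 := by
  intro h0
  obtain ⟨v, hv⟩ := zsub_dvd_of_eval₂_eq_zero h0
  exact hm.2 ⟨v, by rw [hw, hv, pow_succ, mul_assoc]⟩

theorem SymT.mul_zpow_mul_neg_one_pow_eq_one {u : LP} {ε : ℂ} {c : ℤ} (h : SymT u ε c)
    {ζ : ℂˣ} (hζ : ζ⁻¹ = ζ) {m : ℕ} (hm : mzIs u ζ m) :
    ε * ↑(ζ ^ c) * (-1) ^ m = 1 := by
  obtain ⟨w, hw⟩ := hm.1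
  have hζinv : (ζ : ℂ)⁻¹ = ζ := by rw [← Units.val_inv_eq_inv_val, hζ]
  have hsym : w = LaurentPolynomial.C ε * T c * (-LaurentPolynomial.C (ζ : ℂ) * T (-1)) ^ m
      * invert w := by
    apply mul_left_cancel₀ (pow_ne_zero m (zsub_ne_zero ζ))
    calc zsub ζ ^ m * w = LaurentPolynomial.C ε * T c * invert (zsub ζ ^ m * w) := by
          rw [← hw]; exact h.eq_C_mul_T_mul_invert
      _ = _ := by rw [map_mul, map_pow, invert_zsub ζ.ne_zero, hζinv]; ring
  have hev := congrArg (eval₂ (RingHom.id ℂ) ζ) hsym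
  simp only [map_mul, map_pow, map_neg, eval₂_C, eval₂_T, eval₂_invert, hζ, _root_.zpow_neg,
    zpow_one, RingHom.id_apply] at hev
  have hζζ : -(ζ : ℂ) * ζ = -1 := by
    rw [neg_mul, neg_inj]; nth_rw 1 [← hζinv]; exact inv_mul_cancel₀ ζ.ne_zero
  rw [hζζ] at hev
  exact mul_right_cancel₀ (hm.eval₂_quotient_ne_zero hw) (by rw [one_mul]; exact hev.symm)

theorem even_of_neg_one_zpow_eq_one {K : Type*} [DivisionRing K] [CharZero K] {n : ℤ}
    (h : (-1 : K) ^ n = 1) : Even n := by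
  by_contra hn
  rw [neg_one_zpow_eq_ite, if_neg hn] at h
  norm_num at h

theorem symmetry_type_from_roots_at_pm_one_general
    (u : LP) (ε : ℂ) (c : ℤ) (h : SymT u ε c)
    (m₁ m₂ : ℕ) (h₁ : mzIs u 1 m₁) (h₂ : mzIs u (-1) m₂) :
    ε = (-1 : ℂ) ^ m₁ ∧ c % 2 = ((m₁ : ℤ) + (m₂ : ℤ)) % 2 := by
  have at_one := h.mul_zpow_mul_neg_one_pow_eq_one (ζ := 1) inv_one (by simpa using h₁)
  have at_neg_one := h.mul_zpow_mul_neg_one_pow_eq_one (ζ := -1) (by simp) (by simpa using h₂)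
  have hε : ε = (-1 : ℂ) ^ m₁ := by
    simp only [_root_.one_zpow, Units.val_one, mul_one] at at_one
    rw [eq_comm, ← mul_left_inj' (pow_ne_zero m₁ (neg_ne_zero.mpr one_ne_zero)), at_one,
      ← pow_add, Even.neg_one_pow ⟨m₁, rfl⟩]
  refine ⟨hε, ?_⟩
  have heven : Even ((m₁ : ℤ) + c + m₂) := by
    apply even_of_neg_one_zpow_eq_one (K := ℂ)
    rw [zpow_add₀ (by norm_num), zpow_add₀ (by norm_num), zpow_natCast, zpow_natCast, ← hε]
    simpa using at_neg_one
  obtain ⟨r, hr⟩ := heven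
  omega

/-- the symmetry type is determined mod 2 by the multiplicities of the
zeros at `±1` (Lemma 3.2 of the paper). -/
theorem symmetry_type_from_roots_at_pm_one
    (u : LP) (hu : u ≠ 0) (ε : ℂ) (c : ℤ) (hε : Sgn ε) (h : SymT u ε c)
    (m₁ m₂ : ℕ) (h₁ : mzIs u 1 m₁) (h₂ : mzIs u (-1) m₂) :
    ε = (-1 : ℂ) ^ m₁ ∧ c % 2 = ((m₁ : ℤ) + (m₂ : ℤ)) % 2 :=
  symmetry_type_from_roots_at_pm_one_general u ε c h m₁ m₂ h₁ h₂

end QT
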